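/- Let K ⊆ ℝⁿ be a proper convex cone, v ∈ int K, and let f be a homogeneous polynomial of degree d that is K-completely log-concave. Then K ⊆ K(f,v), where K(f,v) = {x ∈ ℝⁿ : f(x) ≥ 0, D_v f(x) ≥ 0, …, D_v^{d−1} f(x) ≥ 0}. -/

import Mathlib

open Set

/-- Directional derivative `D_v f (x) = ⟨∇f(x), v⟩ = fderiv ℝ f x v`. -/
noncomputable def dirDeriv {n : ℕ} (v : Fin n → ℝ) (f : (Fin n → ℝ) → ℝ) :
    (Fin n → ℝ) → ℝ := fun x => fderiv ℝ f x v

/-- The closed cone `K(f,v) = {x : f(x) ≥ 0, D_v f(x) ≥ 0, …, D_v^{d-1} f(x) ≥ 0}`. -/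
def Kclosed {n : ℕ} (d : ℕ) (f : (Fin n → ℝ) → ℝ) (v : Fin n → ℝ) : Set (Fin n → ℝ) :=
  {x | ∀ k < d, 0 ≤ (dirDeriv v)^[k] f x}

lemma hasFDerivAt_eval' {n : ℕ} (p : MvPolynomial (Fin n) ℝ) (x : Fin n → ℝ) :
    HasFDerivAt (fun y => MvPolynomial.eval y p)
      (∑ i, MvPolynomial.eval x (MvPolynomial.pderiv i p) •
        (ContinuousLinearMap.proj i : (Fin n → ℝ) →L[ℝ] ℝ)) x := by
  induction p using MvPolynomial.induction_on with
  | C a =>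
    simpa using (hasFDerivAt_const (MvPolynomial.eval x (MvPolynomial.C a)) x)
  | add p q hp hq =>
    have := hp.add hq
    convert (config := { preTransparency := .default, transparency := .default }) this using 1
    · funext y; simp
    · rw [← Finset.sum_add_distrib]
      congr 1; funext i; simp [add_smul]
  | mul_X p i hp =>
    have hX : HasFDerivAt (fun y : Fin n → ℝ => y i)
        ((ContinuousLinearMap.proj i : (Fin n → ℝ) →L[ℝ] ℝ)) x :=
      (ContinuousLinearMap.proj i : (Fin n → ℝ) →L[ℝ] ℝ).hasFDerivAt
    have := hp.mul hX
    convert (config := { preTransparency := .default, transparency := .default }) this using 1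
    · funext y; simp
    · ext w
      simp [MvPolynomial.pderiv_X, Pi.single_apply, Finset.mul_sum, mul_comm, mul_assoc,
        Finset.sum_add_distrib, add_mul, mul_add]
      congr 1
      · simp only [apply_ite (MvPolynomial.eval x), map_zero, mul_ite, mul_zero]
        rw [Finset.sum_ite_eq Finset.univ i (fun j => w j * MvPolynomial.eval x p)]
        simp
      · exact Finset.sum_congr rfl fun j _ => by ring

lemma dirDeriv_eval {n : ℕ} (v : Fin n → ℝ) (p : MvPolynomial (Fin n) ℝ) :
    dirDeriv v (fun y => MvPolynomial.eval y p) =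
      fun x => MvPolynomial.eval x (∑ i, MvPolynomial.C (v i) * MvPolynomial.pderiv i p) := by
  funext x
  have h := (hasFDerivAt_eval' p x).fderiv
  simp only [dirDeriv, h]
  simp [ContinuousLinearMap.sum_apply, mul_comm]

lemma iter_dirDeriv_poly {n : ℕ} (v : Fin n → ℝ) (f : (Fin n → ℝ) → ℝ)
    (hpoly : ∃ p : MvPolynomial (Fin n) ℝ, ∀ x, f x = MvPolynomial.eval x p) (k : ℕ) :
    ∃ q : MvPolynomial (Fin n) ℝ, (dirDeriv v)^[k] f = fun x => MvPolynomial.eval x q := by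
  induction k with
  | zero =>
    obtain ⟨p, hp⟩ := hpoly
    exact ⟨p, funext hp⟩
  | succ k ih =>
    obtain ⟨q, hq⟩ := ih
    refine ⟨∑ i, MvPolynomial.C (v i) * MvPolynomial.pderiv i q, ?_⟩
    rw [Function.iterate_succ_apply', hq, dirDeriv_eval]

lemma foldr_const_dirDeriv {n : ℕ} (v : Fin n → ℝ) (f : (Fin n → ℝ) → ℝ) (k : ℕ) :
    List.foldr dirDeriv f (List.ofFn (fun _ : Fin k => v)) = (dirDeriv v)^[k] f := by
  induction k with
  | zero => simp
  | succ k ih =>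
    rw [List.ofFn_succ, List.foldr_cons, ih, Function.iterate_succ_apply']

/-- For a proper convex cone `K`, `v ∈ int K`, and a homogeneous
`K`-completely log-concave polynomial `f` of degree `d`, we have `K ⊆ K(f,v)`. -/
theorem stmt6 (n d : ℕ) (K : Set (Fin n → ℝ))
    (hKclosed : IsClosed K) (hKconv : Convex ℝ K)
    (hKcone : ∀ x ∈ K, ∀ c : ℝ, 0 ≤ c → c • x ∈ K)
    (hKint : (interior K).Nonempty)
    (hKpointed : ∀ x ∈ K, -x ∈ K → x = 0)
    (f : (Fin n → ℝ) → ℝ)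
    (hpoly : ∃ p : MvPolynomial (Fin n) ℝ, ∀ x, f x = MvPolynomial.eval x p)
    (hhom : ∀ c : ℝ, 0 < c → ∀ x, f (c • x) = c ^ d * f x)
    (hCLC : ∀ m : ℕ, m ≤ d → ∀ a : Fin m → (Fin n → ℝ), (∀ i, a i ∈ K) →
      (∀ x ∈ interior K, 0 < List.foldr dirDeriv f (List.ofFn a) x) ∧
      ConcaveOn ℝ (interior K)
        (fun x => Real.log (List.foldr dirDeriv f (List.ofFn a) x)))
    (v : Fin n → ℝ) (hvK : v ∈ interior K) :
    K ⊆ Kclosed d f v := by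
  intro x hx k hk
  set g := (dirDeriv v)^[k] f with hg
  -- positivity on the interior
  have hpos : ∀ y ∈ interior K, 0 < g y := by
    intro y hy
    have := (hCLC k hk.le (fun _ : Fin k => v)
      (fun _ => interior_subset hvK)).1 y hy
    rwa [foldr_const_dirDeriv] at this
  -- continuity of g
  obtain ⟨q, hq⟩ := iter_dirDeriv_poly v f hpoly k
  have hcont : Continuous g := by
    rw [hg, hq]; exact MvPolynomial.continuous_eval q
  -- points on the open segment from x to v are interior
  have hmem : ∀ t : ℝ, t ∈ Set.Ioc (0:ℝ) 1 → x + t • (v - x) ∈ interior K :=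
    fun t ht => hKconv.add_smul_sub_mem_interior hx hvK ht
  -- take the limit t → 0⁺
  have htend : Filter.Tendsto (fun t : ℝ => g (x + t • (v - x)))
      (nhdsWithin 0 (Set.Ioi 0)) (nhds (g x)) := by
    have hc : Continuous (fun t : ℝ => x + t • (v - x)) := by continuity
    have := (hcont.comp hc).tendsto 0
    simp only [Function.comp, zero_smul, add_zero] at this
    exact this.mono_left nhdsWithin_le_nhds
  refine ge_of_tendsto htend ?_
  filter_upwards [Ioc_mem_nhdsGT_of_mem (Set.left_mem_Ico.2 zero_lt_one)] with t ht
  exact (hpos _ (hmem t ht)).le
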